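/- Let Φ = Ω or Φ = Γ and let X be an infinite Hausdorff topological space. The following are equivalent, where 0̄ denotes the constant zero function on X: (a) USC*_p(X) satisfies the selection principle S₁(Φ̃↑, 𝒮), i.e., S₁(Φ̃↑(USC*_p(X)), 𝒮(USC*_p(X))); (b) USC*_p(X) is sequentially separable and X is an S₁(Φ,Γ)-space; (c) USC*_p(X) is sequentially separable and satisfies S₁(Φ_h,Γ_h) for every h ∈ USC*_p(X); (d) USC*_p(X) is sequentially separable and satisfies both S₁(Γ_0̄,Γ_0̄) and S₁(Φ̃↑,Γ_h) for every h ∈ USC*_p(X). -/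

import Mathlib

open Set Filter Topology

namespace Selectors

variable {X : Type*}

/-- Kinds of covers / of pointwise properties: `o` (ordinary covers / 𝒪),
`omega` (ω-covers / Ω), `gamma` (γ-covers / Γ). -/
inductive CoverKind : Type
  | o | omega | gamma

/-- `f` is a bounded upper semicontinuous real function on `X`. -/
def IsUSCb [TopologicalSpace X] (f : X → ℝ) : Prop :=
  (∀ a : ℝ, IsOpen {x | f x < a}) ∧ ∃ M : ℝ, ∀ x, |f x| ≤ M

/-- `USC*_p(X)`: the set of bounded upper semicontinuous real functions on `X`,
regarded as a subset of `X → ℝ` with the product (pointwise convergence) topology. -/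
def USCb (X : Type*) [TopologicalSpace X] : Set (X → ℝ) := {f | IsUSCb f}

/-- `C*_p(X)`: the set of bounded continuous real functions on `X`. -/
def Cb (X : Type*) [TopologicalSpace X] : Set (X → ℝ) :=
  {f | Continuous f ∧ ∃ M : ℝ, ∀ x, |f x| ≤ M}

/-- `𝒰` is a cover of `X`. -/
def IsCover (𝒰 : Set (Set X)) : Prop := ∀ x : X, ∃ U ∈ 𝒰, x ∈ U

/-- The (not necessarily open) cover condition of the given kind:
an `o`-cover is a cover; an ω-cover is a cover not containing `X` such that every
finite subset of `X` is contained in a member; a γ-cover is an infinite cover such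
that each point belongs to all but finitely many members. -/
def kindSets (k : CoverKind) (𝒰 : Set (Set X)) : Prop :=
  match k with
  | .o => IsCover 𝒰
  | .omega => IsCover 𝒰 ∧ Set.univ ∉ 𝒰 ∧ ∀ F : Set X, F.Finite → ∃ U ∈ 𝒰, F ⊆ U
  | .gamma => IsCover 𝒰 ∧ 𝒰.Infinite ∧ ∀ x : X, {U ∈ 𝒰 | x ∉ U}.Finite

/-- The family `𝒪(X)`, `Ω(X)` or `Γ(X)` of open covers/ω-covers/γ-covers of `X`. -/
def OpenKindCovers (X : Type*) [TopologicalSpace X] (k : CoverKind) : Set (Set (Set X)) :=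
  {𝒰 | (∀ U ∈ 𝒰, IsOpen U) ∧ kindSets k 𝒰}

/-- The selection principle `S₁(A, B)`. -/
def S1 {α : Type*} (A B : Set (Set α)) : Prop :=
  ∀ u : ℕ → Set α, (∀ n, u n ∈ A) →
    ∃ sel : ℕ → α, (∀ n, sel n ∈ u n) ∧ Set.range sel ∈ B

/-- The selection principle `S_fin(A, B)`. -/
def Sfin {α : Type*} (A B : Set (Set α)) : Prop :=
  ∀ u : ℕ → Set α, (∀ n, u n ∈ A) →
    ∃ V : ℕ → Set α, (∀ n, V n ⊆ u n ∧ (V n).Finite) ∧ (⋃ n, V n) ∈ B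

/-- Property `(𝒪_h)` of a family `F` of real functions. -/
def PropO (h : X → ℝ) (F : Set (X → ℝ)) : Prop :=
  ∀ x : X, h x ∈ closure ((fun f : X → ℝ => f x) '' F)

/-- Property `(Ω_h)`: `h ∉ F` and `h` belongs to the closure of `F` in `ℝ^X`. -/
def PropOmega (h : X → ℝ) (F : Set (X → ℝ)) : Prop :=
  h ∉ F ∧ h ∈ closure F

/-- Property `(Γ_h)`. -/
def PropGamma (h : X → ℝ) (F : Set (X → ℝ)) : Prop :=
  F.Infinite ∧ ∀ ε : ℝ, 0 < ε → ∀ x : X, {f ∈ F | ε ≤ |f x - h x|}.Finite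

/-- Property `(Φ_h)` for `Φ = 𝒪, Ω, Γ`. -/
def kindProp (k : CoverKind) (h : X → ℝ) (F : Set (X → ℝ)) : Prop :=
  match k with
  | .o => PropO h F
  | .omega => PropOmega h F
  | .gamma => PropGamma h F

/-- The family `Φ_h(H) = {F ⊆ H : F has (Φ_h) and ∀ f ∈ F, f ≥ h ∧ f - h ∈ H}`. -/
def PhiH (k : CoverKind) (h : X → ℝ) (H : Set (X → ℝ)) : Set (Set (X → ℝ)) :=
  {F | F ⊆ H ∧ kindProp k h F ∧ ∀ f ∈ F, h ≤ f ∧ f - h ∈ H}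

/-- `F ⊆ H` is sequentially dense in `H` (with respect to pointwise convergence). -/
def SeqDenseIn (F H : Set (X → ℝ)) : Prop :=
  F ⊆ H ∧ ∀ f ∈ H, ∃ u : ℕ → (X → ℝ), (∀ n, u n ∈ F) ∧
    Filter.Tendsto u Filter.atTop (nhds f)

/-- `F ⊆ H` is dense in `H`. -/
def DenseIn (F H : Set (X → ℝ)) : Prop :=
  F ⊆ H ∧ H ⊆ closure F

/-- `F` is pointwise dense: `{f x : f ∈ F}` is dense in `ℝ` for every `x`. -/
def PointwiseDense (F : Set (X → ℝ)) : Prop :=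
  ∀ x : X, Dense {y : ℝ | ∃ f ∈ F, f x = y}

/-- `F ⊆ H` is upper sequentially dense in `H`. -/
def UpperSeqDenseIn (F H : Set (X → ℝ)) : Prop :=
  F ⊆ H ∧ ∀ f ∈ H, ∃ u : ℕ → (X → ℝ),
    (∀ n, u n ∈ F ∧ f ≤ u n ∧ u n - f ∈ H) ∧
    Filter.Tendsto u Filter.atTop (nhds f)

/-- `F ⊆ H` is upper dense in `H`: for every `f ∈ H` the set
`{h ∈ F : h ≥ f ∧ h - f ∈ H}` is dense in `{h ∈ H : h ≥ f}`. -/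
def UpperDenseIn (F H : Set (X → ℝ)) : Prop :=
  F ⊆ H ∧ ∀ f ∈ H, {g | g ∈ H ∧ f ≤ g} ⊆ closure {g | g ∈ F ∧ f ≤ g ∧ g - f ∈ H}

/-- `𝒮(H)`: the family of sequentially dense subsets of `H`. -/
def Sfam (H : Set (X → ℝ)) : Set (Set (X → ℝ)) := {F | SeqDenseIn F H}

/-- `𝒟(H)`: the family of dense subsets of `H`. -/
def Dfam (H : Set (X → ℝ)) : Set (Set (X → ℝ)) := {F | DenseIn F H}

/-- `𝒫(H)`: the family of pointwise dense subsets of `H`. -/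
def Pfam (H : Set (X → ℝ)) : Set (Set (X → ℝ)) := {F | F ⊆ H ∧ PointwiseDense F}

/-- `Φ̃↑(H)`: for `Φ = Γ` the upper sequentially dense subsets, for `Φ = Ω`
the upper dense subsets, for `Φ = 𝒪` the pointwise dense subsets of `H`. -/
def upTilde (k : CoverKind) (H : Set (X → ℝ)) : Set (Set (X → ℝ)) :=
  match k with
  | .o => Pfam H
  | .omega => {F | UpperDenseIn F H}
  | .gamma => {F | UpperSeqDenseIn F H}

/-- `H` is separable: it has a countable dense subset. -/
def SeparableSet (H : Set (X → ℝ)) : Prop := ∃ D, D.Countable ∧ DenseIn D H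

/-- `H` is sequentially separable: it has a countable sequentially dense subset. -/
def SeqSeparableSet (H : Set (X → ℝ)) : Prop := ∃ D, D.Countable ∧ SeqDenseIn D H

/-- Property `(ε)`: every open ω-cover contains a countable ω-subcover. -/
def PropEps (X : Type*) [TopologicalSpace X] : Prop :=
  ∀ 𝒰 : Set (Set X), 𝒰 ∈ OpenKindCovers X CoverKind.omega →
    ∃ 𝒱 ⊆ 𝒰, 𝒱.Countable ∧ 𝒱 ∈ OpenKindCovers X CoverKind.omega

/-- `S` is an `F_σ` set with respect to the topology `t`. -/
def IsFsigmaIn (t : TopologicalSpace X) (S : Set X) : Prop :=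
  ∃ C : ℕ → Set X, (∀ n, IsClosed[t] (C n)) ∧ S = ⋃ n, C n

/-- `S` is locally closed with respect to `t`: an intersection of a `t`-open
and a `t`-closed set. -/
def IsLocallyClosedIn (t : TopologicalSpace X) (S : Set X) : Prop :=
  ∃ U F : Set X, IsOpen[t] U ∧ IsClosed[t] F ∧ S = U ∩ F

/-- `S` is a cozero set with respect to `t`. -/
def IsCozeroIn (t : TopologicalSpace X) (S : Set X) : Prop :=
  ∃ f : X → ℝ, @Continuous X ℝ t inferInstance f ∧ S = {x | f x ≠ 0}

/-- The `OB`-property of `⟨X, t⟩`: there is a separable metrizable topology `t'`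
on `X` weaker than `t` such that every locally closed subset of `⟨X, t⟩` is an
`F_σ`-set in `t'`. -/
def OBProperty (X : Type*) [t : TopologicalSpace X] : Prop :=
  ∃ t' : TopologicalSpace X,
    (∀ s : Set X, IsOpen[t'] s → IsOpen[t] s) ∧
    @TopologicalSpace.MetrizableSpace X t' ∧
    @TopologicalSpace.SeparableSpace X t' ∧
    ∀ S : Set X, IsLocallyClosedIn t S → IsFsigmaIn t' S

/-- The `V`-property of `⟨X, t⟩`: there is a separable metrizable topology `t'`
on `X` weaker than `t` such that every cozero subset of `⟨X, t⟩` is an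
`F_σ`-set in `t'`. -/
def VProperty (X : Type*) [t : TopologicalSpace X] : Prop :=
  ∃ t' : TopologicalSpace X,
    (∀ s : Set X, IsOpen[t'] s → IsOpen[t] s) ∧
    @TopologicalSpace.MetrizableSpace X t' ∧
    @TopologicalSpace.SeparableSpace X t' ∧
    ∀ S : Set X, IsCozeroIn t S → IsFsigmaIn t' S

/-- `iw(X) = ℵ₀`: `X` can be mapped by a one-to-one continuous map onto a
Tychonoff space of countable weight. -/
def IWCountable (X : Type*) [TopologicalSpace X] : Prop :=
  ∃ (Y : Type) (tY : TopologicalSpace Y) (f : X → Y),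
    @Continuous X Y _ tY f ∧ Function.Bijective f ∧
    @T35Space Y tY ∧ @SecondCountableTopology Y tY

/-- `Φ^sh(X)`: the family of open shrinkable φ-covers of `X`. -/
def ShFam (X : Type*) [TopologicalSpace X] (k : CoverKind) : Set (Set (Set X)) :=
  {𝒰 | 𝒰 ∈ OpenKindCovers X k ∧
    ∃ 𝒲 ∈ OpenKindCovers X k, ∀ W ∈ 𝒲, ∃ U ∈ 𝒰, closure W ⊆ U}

/-- A zero set. -/
def IsZeroSet [TopologicalSpace X] (S : Set X) : Prop :=
  ∃ f : X → ℝ, Continuous f ∧ S = {x | f x = 0}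

/-- A cozero set. -/
def IsCozeroSet [TopologicalSpace X] (S : Set X) : Prop :=
  ∃ f : X → ℝ, Continuous f ∧ S = {x | f x ≠ 0}

/-- `Φ^fsh_cz(X)`: the family of functionally shrinkable φ-covers of `X`
consisting of cozero sets. -/
def FshCzFam (X : Type*) [TopologicalSpace X] (k : CoverKind) : Set (Set (Set X)) :=
  {𝒰 | (∀ U ∈ 𝒰, IsCozeroSet U) ∧ kindSets k 𝒰 ∧
    ∃ 𝒲 : Set (Set X), (∀ W ∈ 𝒲, IsZeroSet W) ∧ kindSets k 𝒲 ∧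
      ∀ W ∈ 𝒲, ∃ U ∈ 𝒰, closure W ⊆ U}

/-- The function `f_{U,g}`: equal to `0` on `U` and to `1 + sup |g|` off `U`. -/
noncomputable def fU (U : Set X) (g : X → ℝ) : X → ℝ :=
  Uᶜ.indicator fun _ => 1 + ⨆ y, |g y|

/-- The family `S(𝒰) = {f_{U,g} + g : U ∈ 𝒰, g ∈ USC*_p(X)}`. -/
def SU [TopologicalSpace X] (𝒰 : Set (Set X)) : Set (X → ℝ) :=
  {f | ∃ U ∈ 𝒰, ∃ g ∈ USCb X, f = fU U g + g}

/-- The Sorgenfrey topology on `ℝ`, generated by the half-open intervals `[a, b)`. -/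
def sorgenfreyTop : TopologicalSpace ℝ :=
  TopologicalSpace.generateFrom {s | ∃ a b : ℝ, s = Set.Ico a b}

/-- The Sorgenfrey plane topology on `ℝ × ℝ`. -/
def sorgenfreyPlaneTop : TopologicalSpace (ℝ × ℝ) :=
  @instTopologicalSpaceProd ℝ ℝ sorgenfreyTop sorgenfreyTop

/-!
If the functions of a family `I` lie above a target `t` and approximate it (in the closure for
`Φ = Ω`, as a convergent sequence for `Φ = Γ`), the open sets `{g - t < ε}`, `g ∈ I`, form a
Φ-cover (or one of them is `X`). Selecting from these covers with `ε = 1/(n+1)` so that every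
point lies in almost all chosen sets gives `gₙ` with `gₙ - tₙ → 0` pointwise; the targets
`tₙ = h`, `tₙ = h + 1/(n+1)` and `tₙ` running through a countable sequentially dense set give
(c), (d) and (a) from (b).

Conversely, for a Φ-cover `𝒰` the family `S(𝒰)` of the functions `f_{U,g} + g` is upper
(sequentially) dense, and `f_{U,g} + g ≥ 1` off `U`. So a sequence from `S(𝒱ₙ)` converging
to `0̄`, as provided by (a) or by (d), picks sets that eventually contain each point; applied to
covers `𝒱ₙ` refining `𝒰₀, …, 𝒰ₙ` this gives `S₁(Φ, Γ)`. For (c) ⇒ (b) the indicators of the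
complements of the members of `𝒰` play the role of `S(𝒰)`.
-/

section fU

variable {X : Type*}

theorem one_add_iSup_abs_nonneg (g : X → ℝ) : 0 ≤ 1 + ⨆ y, |g y| :=
  add_nonneg zero_le_one (Real.iSup_nonneg fun _ => abs_nonneg _)

theorem fU_nonneg (U : Set X) (g : X → ℝ) : 0 ≤ fU U g :=
  fun _ => indicator_nonneg (fun _ _ => one_add_iSup_abs_nonneg g) _

theorem fU_apply_of_mem {U : Set X} (g : X → ℝ) {x : X} (hx : x ∈ U) : fU U g x = 0 :=
  indicator_of_notMem (not_not_intro hx) _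

end fU

section USCb

variable {X : Type*} [TopologicalSpace X]

theorem mem_USCb_iff {f : X → ℝ} :
    f ∈ USCb X ↔ UpperSemicontinuous f ∧ ∃ M : ℝ, ∀ x, |f x| ≤ M := by
  rw [upperSemicontinuous_iff_isOpen_preimage]
  rfl

theorem const_mem_USCb (c : ℝ) : (fun _ : X => c) ∈ USCb X :=
  mem_USCb_iff.2 ⟨upperSemicontinuous_const, |c|, fun _ => le_rfl⟩

theorem zero_mem_USCb : (0 : X → ℝ) ∈ USCb X :=
  const_mem_USCb 0

theorem add_mem_USCb {f g : X → ℝ} (hf : f ∈ USCb X) (hg : g ∈ USCb X) : f + g ∈ USCb X := by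
  obtain ⟨hf, M, hM⟩ := mem_USCb_iff.1 hf
  obtain ⟨hg, N, hN⟩ := mem_USCb_iff.1 hg
  exact mem_USCb_iff.2
    ⟨hf.add hg, M + N, fun x => (abs_add_le _ _).trans (add_le_add (hM x) (hN x))⟩

theorem indicator_const_mem_USCb {s : Set X} (hs : IsClosed s) {c : ℝ} (hc : 0 ≤ c) :
    s.indicator (fun _ => c) ∈ USCb X := by
  refine mem_USCb_iff.2 ⟨hs.upperSemicontinuous_indicator hc, c, fun x => ?_⟩
  by_cases hx : x ∈ s <;> simp [hx, abs_of_nonneg hc, hc]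

theorem indicator_mem_USCb_of_finite [T1Space X] {A : Set X} (hA : A.Finite) {w : X → ℝ}
    (hw : ∀ x, 0 ≤ w x) : A.indicator w ∈ USCb X := by
  have hnonneg : ∀ x, 0 ≤ A.indicator w x := indicator_nonneg fun x _ => hw x
  obtain ⟨M, hM⟩ := (hA.image w).bddAbove
  refine ⟨fun a => ?_, max M 0, fun x => ?_⟩
  · rcases le_or_gt a 0 with ha | ha
    · convert isOpen_empty
      exact eq_empty_of_forall_notMem fun x hx => (hnonneg x).not_gt (hx.trans_le ha)
    · have : {x | A.indicator w x < a} = {x ∈ A | a ≤ w x}ᶜ := by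
        ext x
        by_cases hx : x ∈ A <;> simp [hx, ha]
      rw [this]
      exact (hA.subset fun _ hx => hx.1).isClosed.isOpen_compl
  · by_cases hx : x ∈ A
    · rw [indicator_of_mem hx, abs_of_nonneg (hw x)]
      exact le_max_of_le_left (hM ⟨x, hx, rfl⟩)
    · simp [hx]

theorem fU_mem_USCb {U : Set X} (hU : IsOpen U) (g : X → ℝ) : fU U g ∈ USCb X :=
  indicator_const_mem_USCb hU.isClosed_compl (one_add_iSup_abs_nonneg g)

theorem one_le_fU_add_apply {U : Set X} {g : X → ℝ} (hg : g ∈ USCb X) {x : X} (hx : x ∉ U) :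
    1 ≤ (fU U g + g) x := by
  obtain ⟨-, M, hM⟩ := hg
  have hsup : |g x| ≤ ⨆ y, |g y| := le_ciSup ⟨M, by rintro _ ⟨y, rfl⟩; exact hM y⟩ x
  simp only [Pi.add_apply, fU, indicator_of_mem (show x ∈ Uᶜ from hx)]
  linarith [neg_abs_le (g x)]

theorem SU_subset {𝒰 : Set (Set X)} (hop : ∀ U ∈ 𝒰, IsOpen U) : SU 𝒰 ⊆ USCb X := by
  rintro _ ⟨U, hU, g, hg, rfl⟩
  exact add_mem_USCb (fU_mem_USCb (hop U hU) g) hg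

theorem exists_one_le_of_mem_SU {𝒰 : Set (Set X)} {f : X → ℝ} (hf : f ∈ SU 𝒰) :
    ∃ U ∈ 𝒰, ∀ x ∉ U, 1 ≤ f x := by
  obtain ⟨U, hU, g, hg, rfl⟩ := hf
  exact ⟨U, hU, fun x hx => one_le_fU_add_apply hg hx⟩

theorem ne_zero_of_mem_SU {𝒰 : Set (Set X)} (huniv : univ ∉ 𝒰) {f : X → ℝ} (hf : f ∈ SU 𝒰) :
    f ≠ 0 := by
  rintro rfl
  obtain ⟨U, hU, hone⟩ := exists_one_le_of_mem_SU hf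
  obtain ⟨x, hx⟩ := (ne_univ_iff_exists_notMem U).1 fun h => huniv (h ▸ hU)
  exact (hone x hx).not_gt one_pos

end USCb

theorem mem_closure_of_forall_finset {ι β : Type*} [TopologicalSpace β] {F : Set (ι → β)}
    {w : ι → β} (h : ∀ A : Finset ι, ∃ g ∈ F, ∀ a ∈ A, g a = w a) : w ∈ closure F := by
  refine mem_closure_iff.2 fun s hs hws => ?_
  obtain ⟨A, u, hu, hAs⟩ := isOpen_pi_iff.1 hs w hws
  obtain ⟨g, hgF, hgw⟩ := h A
  exact ⟨g, hAs fun a ha => (hgw a ha).symm ▸ (hu a ha).2, hgF⟩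

theorem finite_setOf_not_of_eventually {p : ℕ → Prop} (h : ∀ᶠ n in atTop, p n) :
    {n | ¬ p n}.Finite :=
  eventually_cofinite.1 (Nat.cofinite_eq_atTop ▸ h)

theorem exists_tendsto_comp_of_notMem_range {Y : Type*} [TopologicalSpace Y] [T1Space Y]
    {s : ℕ → Y} {y : Y} (hy : y ∉ range s) {u : ℕ → Y} (hu : ∀ j, u j ∈ range s)
    (hlim : Tendsto u atTop (𝓝 y)) :
    ∃ φ : ℕ → ℕ, (∀ m, m ≤ φ m) ∧ Tendsto (s ∘ φ) atTop (𝓝 y) := by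
  choose ν hν using hu
  have hfreq : ∀ m, ∃ᶠ j in atTop, m ≤ ν j := by
    intro m hm
    obtain ⟨n, -, hn⟩ := ((finite_Iio m).image s).isClosed.mem_of_tendsto hlim
      (hm.mono fun j hj => ⟨ν j, not_le.1 hj, hν j⟩)
    exact hy ⟨n, hn⟩
  obtain ⟨ψ, hψ, hνψ⟩ := extraction_forall_of_frequently hfreq
  refine ⟨ν ∘ ψ, hνψ, ?_⟩
  have hcomp : s ∘ (ν ∘ ψ) = u ∘ ψ := funext fun j => hν (ψ j)
  rw [hcomp]
  exact hlim.comp hψ.tendsto_atTop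

section PropGamma

variable {X : Type*}

theorem propGamma_range_of_tendsto {h : X → ℝ} {s : ℕ → X → ℝ} (hlim : Tendsto s atTop (𝓝 h))
    (hne : ∀ n, s n ≠ h) : PropGamma h (range s) := by
  refine ⟨fun hfin => ?_, fun ε hε x => ?_⟩
  · obtain ⟨n, hn⟩ := hfin.isClosed.mem_of_tendsto hlim (Eventually.of_forall mem_range_self)
    exact hne n hn
  · have hev : ∀ᶠ n in atTop, |s n x - h x| < ε := by
      simpa [Real.dist_eq] using Metric.tendsto_nhds.1 (tendsto_pi_nhds.1 hlim x) ε hε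
    refine ((finite_setOf_not_of_eventually hev).image s).subset ?_
    rintro _ ⟨⟨n, rfl⟩, hn⟩
    exact ⟨n, not_lt.2 hn, rfl⟩

theorem tendsto_of_propGamma {h : X → ℝ} {F : Set (X → ℝ)} (hF : PropGamma h F)
    {u : ℕ → X → ℝ} (hu : Function.Injective u) (huF : ∀ k, u k ∈ F) : Tendsto u atTop (𝓝 h) := by
  refine tendsto_pi_nhds.2 fun x => Metric.tendsto_nhds.2 fun ε hε => ?_
  rw [← Nat.cofinite_eq_atTop, eventually_cofinite]
  refine ((hF.2 ε hε x).preimage hu.injOn).subset fun k hk => ⟨huF k, ?_⟩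
  simpa [Real.dist_eq] using hk

theorem tendsto_add_const_one_div (h : X → ℝ) :
    Tendsto (fun n : ℕ => h + fun _ => 1 / ((n : ℝ) + 1)) atTop (𝓝 h) := by
  have hc : Tendsto (fun n : ℕ => fun _ : X => 1 / ((n : ℝ) + 1)) atTop (𝓝 0) :=
    tendsto_pi_nhds.2 fun _ => tendsto_one_div_add_atTop_nhds_zero_nat
  simpa using (tendsto_const_nhds (x := h)).add hc

end PropGamma

section Covers

variable {X : Type*} [TopologicalSpace X]

theorem mem_gamma_of_infinite {𝒰 : Set (Set X)} (hop : ∀ U ∈ 𝒰, IsOpen U) (hinf : 𝒰.Infinite)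
    (hfin : ∀ x, {U ∈ 𝒰 | x ∉ U}.Finite) : 𝒰 ∈ OpenKindCovers X .gamma := by
  refine ⟨hop, fun x => ?_, hinf, hfin⟩
  obtain ⟨U, hU, hxU⟩ := (hinf.sdiff (hfin x)).nonempty
  exact ⟨U, hU, not_not.1 fun hx => hxU ⟨hU, hx⟩⟩

theorem mem_gamma_of_subset {𝒰 𝒱 : Set (Set X)} (h𝒰 : 𝒰 ∈ OpenKindCovers X .gamma)
    (hsub : 𝒱 ⊆ 𝒰) (hinf : 𝒱.Infinite) : 𝒱 ∈ OpenKindCovers X .gamma :=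
  mem_gamma_of_infinite (fun U hU => h𝒰.1 U (hsub hU)) hinf fun x =>
    (h𝒰.2.2.2 x).subset fun _ hU => ⟨hsub hU.1, hU.2⟩

theorem diff_univ_mem_gamma {𝒰 : Set (Set X)} (h𝒰 : 𝒰 ∈ OpenKindCovers X .gamma) :
    𝒰 \ {univ} ∈ OpenKindCovers X .gamma :=
  mem_gamma_of_subset h𝒰 sdiff_subset (h𝒰.2.2.1.sdiff (finite_singleton _))

theorem mem_omega_of_mem_gamma {𝒰 : Set (Set X)} (h𝒰 : 𝒰 ∈ OpenKindCovers X .gamma)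
    (huniv : univ ∉ 𝒰) : 𝒰 ∈ OpenKindCovers X .omega := by
  obtain ⟨hop, hcov, hinf, hfin⟩ := h𝒰
  refine ⟨hop, hcov, huniv, fun F hF => ?_⟩
  have hbad : {U ∈ 𝒰 | ¬ F ⊆ U}.Finite := by
    refine (hF.biUnion fun x _ => hfin x).subset fun U ⟨hU, hFU⟩ => ?_
    obtain ⟨x, hxF, hxU⟩ := not_subset.1 hFU
    exact mem_biUnion hxF ⟨hU, hxU⟩
  obtain ⟨U, hU, hFU⟩ := (hinf.sdiff hbad).nonempty
  exact ⟨U, hU, not_not.1 fun h => hFU ⟨hU, h⟩⟩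

theorem range_mem_gamma_or_univ_mem {O : ℕ → Set X} (hop : ∀ k, IsOpen (O k))
    (hev : ∀ x, ∀ᶠ k in atTop, x ∈ O k) :
    range O ∈ OpenKindCovers X .gamma ∨ univ ∈ range O := by
  by_cases hinf : (range O).Infinite
  · refine Or.inl (mem_gamma_of_infinite (forall_mem_range.2 hop) hinf fun x => ?_)
    refine ((finite_setOf_not_of_eventually (hev x)).image O).subset ?_
    rintro _ ⟨⟨k, rfl⟩, hx⟩
    exact ⟨k, hx, rfl⟩
  · have : Finite (range O) := (not_infinite.1 hinf).to_subtype
    obtain ⟨⟨W, hW⟩, hfib⟩ := Finite.exists_infinite_fiber (rangeFactorization O)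
    refine Or.inr (eq_univ_of_forall (fun x => ?_) ▸ hW)
    obtain ⟨k, hkW, hxk⟩ :=
      ((infinite_coe_iff.1 hfib).sdiff (finite_setOf_not_of_eventually (hev x))).nonempty
    have hk : O k = W := congrArg Subtype.val hkW
    exact hk ▸ not_not.1 hxk

theorem range_mem_gamma {O : ℕ → Set X} (hop : ∀ k, IsOpen (O k)) (hne : ∀ k, O k ≠ univ)
    (hev : ∀ x, ∀ᶠ k in atTop, x ∈ O k) : range O ∈ OpenKindCovers X .gamma :=
  (range_mem_gamma_or_univ_mem hop hev).resolve_right fun ⟨k, hk⟩ => hne k hk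

theorem exists_injective_eventually_mem {𝒰 : Set (Set X)} (h𝒰 : 𝒰 ∈ OpenKindCovers X .gamma) :
    ∃ e : ℕ → Set X, Function.Injective e ∧ (∀ k, e k ∈ 𝒰) ∧ ∀ x, ∀ᶠ k in atTop, x ∈ e k := by
  let e := h𝒰.2.2.1.natEmbedding
  have he : Function.Injective fun k => (e k : Set X) := Subtype.val_injective.comp e.injective
  refine ⟨fun k => e k, he, fun k => (e k).2, fun x => ?_⟩
  rw [← Nat.cofinite_eq_atTop, eventually_cofinite]
  exact ((h𝒰.2.2.2 x).preimage he.injOn).subset fun k hk => ⟨(e k).2, hk⟩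

theorem S1_gamma_of_S1_omega
    (hS : S1 (OpenKindCovers X .omega) (OpenKindCovers X .gamma)) :
    S1 (OpenKindCovers X .gamma) (OpenKindCovers X .gamma) := by
  intro 𝒰 h𝒰
  obtain ⟨U, hU, hrange⟩ := hS (fun n => 𝒰 n \ {univ}) fun n =>
    mem_omega_of_mem_gamma (diff_univ_mem_gamma (h𝒰 n)) fun h => h.2 rfl
  exact ⟨U, fun n => (hU n).1, hrange⟩

/-- Removing from the `m`-th cover the sets `e i j` with `i, j < m` makes the selection
finite-to-one, so that the γ-property of its range becomes a property of the indices. -/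
theorem exists_eventually_mem_of_S1_gamma
    (hS : S1 (OpenKindCovers X .gamma) (OpenKindCovers X .gamma)) {𝒰 : ℕ → Set (Set X)}
    (h𝒰 : ∀ n, 𝒰 n ∈ OpenKindCovers X .gamma) :
    ∃ U : ℕ → Set X, (∀ n, U n ∈ 𝒰 n) ∧ ∀ x, ∀ᶠ n in atTop, x ∈ U n := by
  choose e he he𝒰 _ using fun n => exists_injective_eventually_mem (h𝒰 n)
  let 𝒱 : ℕ → Set (Set X) := fun m => range (e m) \ image2 e (Iio m) (Iio m)
  have h𝒱 : ∀ m, 𝒱 m ∈ OpenKindCovers X .gamma := fun m =>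
    mem_gamma_of_subset (h𝒰 m) (sdiff_subset.trans (range_subset_iff.2 (he𝒰 m)))
      ((infinite_range_of_injective (he m)).sdiff ((finite_Iio m).image2 _ (finite_Iio m)))
  obtain ⟨U, hU, hrange⟩ := hS 𝒱 h𝒱
  have hfiber : ∀ W ∈ range U, (U ⁻¹' {W}).Finite := by
    rintro _ ⟨n, rfl⟩
    obtain ⟨k, hk⟩ := (hU n).1
    refine (finite_Iic (max n k)).subset fun m hm => ?_
    by_contra hlt
    simp only [mem_Iic, not_le, max_lt_iff] at hlt
    exact (hU m).2 ⟨n, hlt.1, k, hlt.2, hk.trans hm.symm⟩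
  refine ⟨U, fun n => sdiff_subset.trans (range_subset_iff.2 (he𝒰 n)) (hU n), fun x => ?_⟩
  rw [← Nat.cofinite_eq_atTop, eventually_cofinite]
  exact ((hrange.2.2.2 x).preimage' fun W hW => hfiber W hW.1).subset fun n hn => ⟨⟨n, rfl⟩, hn⟩

theorem exists_eventually_mem_of_S1_omega
    (hS : S1 (OpenKindCovers X .omega) (OpenKindCovers X .gamma)) {𝒰 : ℕ → Set (Set X)}
    (h𝒰 : ∀ n, 𝒰 n ∈ OpenKindCovers X .omega) :
    ∃ U : ℕ → Set X, (∀ n, U n ∈ 𝒰 n) ∧ ∀ x, ∀ᶠ n in atTop, x ∈ U n := by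
  choose 𝒢 h𝒢 h𝒢γ using fun n => hS (fun _ => 𝒰 n) fun _ => h𝒰 n
  obtain ⟨U, hU, hev⟩ := exists_eventually_mem_of_S1_gamma (S1_gamma_of_S1_omega hS) h𝒢γ
  refine ⟨U, fun n => ?_, hev⟩
  obtain ⟨k, hk⟩ := hU n
  exact hk ▸ h𝒢 n k

theorem exists_eventually_mem_of_S1 {Φ : CoverKind} (hΦ : Φ = .omega ∨ Φ = .gamma)
    (hS : S1 (OpenKindCovers X Φ) (OpenKindCovers X .gamma)) {𝒰 : ℕ → Set (Set X)}
    (h𝒰 : ∀ n, 𝒰 n ∈ OpenKindCovers X Φ ∨ univ ∈ 𝒰 n) :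
    ∃ U : ℕ → Set X, (∀ n, U n ∈ 𝒰 n) ∧ ∀ x, ∀ᶠ n in atTop, x ∈ U n := by
  classical
  have hsel : ∀ 𝒱 : ℕ → Set (Set X), (∀ n, 𝒱 n ∈ OpenKindCovers X Φ) →
      ∃ U : ℕ → Set X, (∀ n, U n ∈ 𝒱 n) ∧ ∀ x, ∀ᶠ n in atTop, x ∈ U n := by
    rcases hΦ with rfl | rfl
    exacts [fun _ => exists_eventually_mem_of_S1_omega hS,
      fun _ => exists_eventually_mem_of_S1_gamma hS]
  by_cases hb : ∃ b, 𝒰 b ∈ OpenKindCovers X Φ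
  · obtain ⟨b, hb⟩ := hb
    obtain ⟨V, hV, hev⟩ :=
      hsel (fun n => if 𝒰 n ∈ OpenKindCovers X Φ then 𝒰 n else 𝒰 b) fun n => by
        split_ifs with h
        exacts [h, hb]
    refine ⟨fun n => if 𝒰 n ∈ OpenKindCovers X Φ then V n else univ, fun n => ?_,
      fun x => (hev x).mono fun n hn => ?_⟩
    · have hVn := hV n
      dsimp only
      split_ifs at hVn ⊢ with h
      exacts [hVn, (h𝒰 n).resolve_left h]
    · dsimp only
      split_ifs
      exacts [hn, mem_univ x]
  · exact ⟨fun _ => univ, fun n => (h𝒰 n).resolve_left fun h => hb ⟨n, h⟩,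
      fun x => Eventually.of_forall fun _ => mem_univ x⟩

end Covers

section Refinement

variable {X : Type*} [TopologicalSpace X]

theorem exists_refining_omega {𝒰 : ℕ → Set (Set X)} (h𝒰 : ∀ n, 𝒰 n ∈ OpenKindCovers X .omega) :
    ∃ 𝒱 : ℕ → Set (Set X), (∀ n, 𝒱 n ∈ OpenKindCovers X .omega) ∧
      ∀ n, ∀ V ∈ 𝒱 n, ∀ i ≤ n, ∃ U ∈ 𝒰 i, U ≠ univ ∧ V ⊆ U := by
  let 𝒱 : ℕ → Set (Set X) := fun n =>
    {V | ∃ s : ℕ → Set X, (∀ i, s i ∈ 𝒰 i) ∧ V = ⋂ i ∈ Iic n, s i}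
  have hrefine : ∀ n, ∀ V ∈ 𝒱 n, ∀ i ≤ n, ∃ U ∈ 𝒰 i, U ≠ univ ∧ V ⊆ U := by
    rintro n _ ⟨s, hs, rfl⟩ i hi
    exact ⟨s i, hs i, fun h => (h𝒰 i).2.2.1 (h ▸ hs i), biInter_subset_of_mem (mem_Iic.2 hi)⟩
  have hfin : ∀ n, ∀ F : Set X, F.Finite → ∃ V ∈ 𝒱 n, F ⊆ V := by
    intro n F hF
    choose s hs hFs using fun i => (h𝒰 i).2.2.2 F hF
    exact ⟨_, ⟨s, hs, rfl⟩, subset_iInter₂ fun i _ => hFs i⟩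
  refine ⟨𝒱, fun n => ⟨?_, fun x => ?_, fun huniv => ?_, hfin n⟩, hrefine⟩
  · rintro _ ⟨s, hs, rfl⟩
    exact (finite_Iic n).isOpen_biInter fun i _ => (h𝒰 i).1 _ (hs i)
  · obtain ⟨V, hV, hxV⟩ := hfin n {x} (finite_singleton x)
    exact ⟨V, hV, hxV rfl⟩
  · obtain ⟨U, -, hU, hUV⟩ := hrefine n univ huniv 0 (Nat.zero_le n)
    exact hU (univ_subset_iff.1 hUV)

theorem exists_refining_gamma {𝒰 : ℕ → Set (Set X)} (h𝒰 : ∀ n, 𝒰 n ∈ OpenKindCovers X .gamma) :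
    ∃ 𝒱 : ℕ → Set (Set X), (∀ n, 𝒱 n ∈ OpenKindCovers X .gamma) ∧
      ∀ n, ∀ V ∈ 𝒱 n, ∀ i ≤ n, ∃ U ∈ 𝒰 i, U ≠ univ ∧ V ⊆ U := by
  choose e _ he𝒰 hev using fun n => exists_injective_eventually_mem (diff_univ_mem_gamma (h𝒰 n))
  let V : ℕ → ℕ → Set X := fun n k => ⋂ i ∈ Iic n, e i k
  have hrefine : ∀ n k, ∀ i ≤ n, ∃ U ∈ 𝒰 i, U ≠ univ ∧ V n k ⊆ U := fun n k i hi =>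
    ⟨e i k, (he𝒰 i k).1, (he𝒰 i k).2, biInter_subset_of_mem (mem_Iic.2 hi)⟩
  refine ⟨fun n => range (V n), fun n => range_mem_gamma (fun k => ?_) (fun k huniv => ?_)
    fun x => ?_, fun n => forall_mem_range.2 fun k => hrefine n k⟩
  · exact (finite_Iic n).isOpen_biInter fun i _ => (h𝒰 i).1 _ (he𝒰 i k).1
  · obtain ⟨U, -, hU, hUV⟩ := hrefine n k 0 (Nat.zero_le n)
    exact hU (univ_subset_iff.1 (huniv ▸ hUV))
  · exact ((finite_Iic n).eventually_all.2 fun i _ => hev i x).mono fun k hk => mem_iInter₂.2 hk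

theorem exists_refining {Φ : CoverKind} (hΦ : Φ = .omega ∨ Φ = .gamma) {𝒰 : ℕ → Set (Set X)}
    (h𝒰 : ∀ n, 𝒰 n ∈ OpenKindCovers X Φ) :
    ∃ 𝒱 : ℕ → Set (Set X), (∀ n, 𝒱 n ∈ OpenKindCovers X Φ) ∧
      ∀ n, ∀ V ∈ 𝒱 n, ∀ i ≤ n, ∃ U ∈ 𝒰 i, U ≠ univ ∧ V ⊆ U := by
  rcases hΦ with rfl | rfl
  exacts [exists_refining_omega h𝒰, exists_refining_gamma h𝒰]

/-- The subsequence along which the selection tends to `0̄` skips indices; since `𝒱 (φ m)`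
refines `𝒰 m` for `m ≤ φ m`, the set chosen at `φ m` still serves for `𝒰 m`. -/
theorem S1_of_forall_exists_tendsto_zero {Φ : CoverKind} (hΦ : Φ = .omega ∨ Φ = .gamma)
    (h : ∀ 𝒱 : ℕ → Set (Set X), (∀ n, 𝒱 n ∈ OpenKindCovers X Φ) →
      ∃ s : ℕ → X → ℝ, (∀ n, s n ∈ SU (𝒱 n)) ∧
        ∃ u : ℕ → X → ℝ, (∀ j, u j ∈ range s) ∧ Tendsto u atTop (𝓝 0)) :
    S1 (OpenKindCovers X Φ) (OpenKindCovers X .gamma) := by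
  intro 𝒰 h𝒰
  obtain ⟨𝒱, h𝒱, hrefine⟩ := exists_refining hΦ h𝒰
  have h𝒱univ : ∀ n, univ ∉ 𝒱 n := fun n huniv => by
    obtain ⟨U, -, hU, hUV⟩ := hrefine n univ huniv 0 (Nat.zero_le n)
    exact hU (univ_subset_iff.1 hUV)
  obtain ⟨s, hs, u, hu, hlim⟩ := h 𝒱 h𝒱
  obtain ⟨φ, hφ, hsφ⟩ := exists_tendsto_comp_of_notMem_range
    (fun ⟨n, hn⟩ => ne_zero_of_mem_SU (h𝒱univ n) (hs n) hn) hu hlim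
  choose W hW hWs using fun m => exists_one_le_of_mem_SU (hs (φ m))
  choose U hU hUuniv hWU using fun m => hrefine (φ m) (W m) (hW m) m (hφ m)
  have hev : ∀ x, ∀ᶠ m in atTop, x ∈ U m := fun x =>
    ((tendsto_pi_nhds.1 hsφ x).eventually_lt_const one_pos).mono fun m hm =>
      hWU m (not_not.1 fun hx => (hWs m x hx).not_gt hm)
  exact ⟨U, hU, range_mem_gamma (fun m => (h𝒰 m).1 _ (hU m)) hUuniv hev⟩

end Refinement

section UpperApprox

variable {X : Type*} [TopologicalSpace X]

def sublevelCover (t : X → ℝ) (ε : ℝ) (I : Set (X → ℝ)) : Set (Set X) :=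
  (fun g => {x | g x - t x < ε}) '' I

/-- Sublevel covers containing `univ` are allowed: they need not be Φ-covers, but selecting
`univ` is harmless. -/
def IsUpperApprox (Φ : CoverKind) (t : X → ℝ) (I : Set (X → ℝ)) : Prop :=
  (∀ g ∈ I, t ≤ g) ∧
    ∀ ε > 0, sublevelCover t ε I ∈ OpenKindCovers X Φ ∨ univ ∈ sublevelCover t ε I

theorem isUpperApprox_omega {t : X → ℝ} {I : Set (X → ℝ)}
    (hI : ∀ g ∈ I, t ≤ g ∧ g - t ∈ USCb X) (ht : t ∈ closure I) :
    IsUpperApprox .omega t I := by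
  refine ⟨fun g hg => (hI g hg).1, fun ε hε => or_iff_not_imp_right.2 fun huniv => ?_⟩
  have hfin : ∀ F : Set X, F.Finite → ∃ U ∈ sublevelCover t ε I, F ⊆ U := by
    intro F hF
    have hopen : IsOpen {g : X → ℝ | ∀ x ∈ F, g x - t x < ε} := by
      simp only [ofPred_forall]
      exact hF.isOpen_biInter fun x _ =>
        isOpen_lt ((continuous_apply x).sub continuous_const) continuous_const
    obtain ⟨g, hgF, hgI⟩ := mem_closure_iff.1 ht _ hopen fun x _ => by simpa using hε
    exact ⟨_, ⟨g, hgI, rfl⟩, hgF⟩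
  refine ⟨?_, fun x => ?_, huniv, hfin⟩
  · rintro _ ⟨g, hg, rfl⟩
    exact (hI g hg).2.1 ε
  · obtain ⟨U, hU, hxU⟩ := hfin {x} (finite_singleton x)
    exact ⟨U, hU, hxU rfl⟩

theorem isUpperApprox_gamma {t : X → ℝ} {u : ℕ → X → ℝ}
    (hu : ∀ k, t ≤ u k ∧ u k - t ∈ USCb X) (hlim : Tendsto u atTop (𝓝 t)) :
    IsUpperApprox .gamma t (range u) := by
  refine ⟨forall_mem_range.2 fun k => (hu k).1, fun ε hε => ?_⟩
  rw [sublevelCover, ← range_comp]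
  exact range_mem_gamma_or_univ_mem (fun k => (hu k).2.1 ε) fun x =>
    (tendsto_sub_nhds_zero_iff.2 (tendsto_pi_nhds.1 hlim x)).eventually_lt_const hε

theorem exists_isUpperApprox_of_mem_PhiH {Φ : CoverKind} (hΦ : Φ = .omega ∨ Φ = .gamma)
    {h : X → ℝ} {F : Set (X → ℝ)} (hF : F ∈ PhiH Φ h (USCb X)) :
    ∃ I ⊆ F, h ∉ I ∧ IsUpperApprox Φ h I := by
  obtain ⟨-, hprop, hge⟩ := hF
  rcases hΦ with rfl | rfl
  · exact ⟨F, subset_rfl, hprop.1, isUpperApprox_omega hge hprop.2⟩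
  · let e := (hprop.1.sdiff (finite_singleton h)).natEmbedding
    have he : Function.Injective fun k => (e k : X → ℝ) := Subtype.val_injective.comp e.injective
    refine ⟨range fun k => (e k : X → ℝ), range_subset_iff.2 fun k => (e k).2.1,
      fun ⟨k, hk⟩ => (e k).2.2 hk, isUpperApprox_gamma (fun k => hge _ (e k).2.1) ?_⟩
    exact tendsto_of_propGamma hprop he fun k => (e k).2.1

theorem exists_isUpperApprox_of_mem_upTilde {Φ : CoverKind} (hΦ : Φ = .omega ∨ Φ = .gamma)
    {S : Set (X → ℝ)} (hS : S ∈ upTilde Φ (USCb X)) {t : X → ℝ} (ht : t ∈ USCb X) :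
    ∃ I ⊆ S, IsUpperApprox Φ t I := by
  rcases hΦ with rfl | rfl
  · exact ⟨_, fun g hg => hg.1, isUpperApprox_omega (fun g hg => hg.2) (hS.2 t ht ⟨ht, le_rfl⟩)⟩
  · obtain ⟨u, hu, hlim⟩ := hS.2 t ht
    exact ⟨range u, range_subset_iff.2 fun k => (hu k).1,
      isUpperApprox_gamma (fun k => (hu k).2) hlim⟩

theorem exists_tendsto_sub_of_S1 {Φ : CoverKind} (hΦ : Φ = .omega ∨ Φ = .gamma)
    (hS : S1 (OpenKindCovers X Φ) (OpenKindCovers X .gamma)) {I : ℕ → Set (X → ℝ)}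
    {t : ℕ → X → ℝ} (hI : ∀ n, IsUpperApprox Φ (t n) (I n)) :
    ∃ s : ℕ → X → ℝ, (∀ n, s n ∈ I n) ∧ Tendsto (fun n => s n - t n) atTop (𝓝 0) := by
  obtain ⟨U, hU, hev⟩ := exists_eventually_mem_of_S1 hΦ hS fun n =>
    (hI n).2 (1 / ((n : ℝ) + 1)) Nat.one_div_pos_of_nat
  choose s hs hsU using hU
  refine ⟨s, hs, tendsto_pi_nhds.2 fun x => ?_⟩
  refine tendsto_of_tendsto_of_tendsto_of_le_of_le' tendsto_const_nhds
    tendsto_one_div_add_atTop_nhds_zero_nat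
    (Eventually.of_forall fun n => sub_nonneg.2 ((hI n).1 _ (hs n) x))
    ((hev x).mono fun n hn => ?_)
  rw [← hsU n] at hn
  exact hn.le

end UpperApprox

section UpTilde

theorem subset_of_mem_upTilde {X : Type*} {Φ : CoverKind} (hΦ : Φ = .omega ∨ Φ = .gamma)
    {S H : Set (X → ℝ)} (hS : S ∈ upTilde Φ H) : S ⊆ H := by
  rcases hΦ with rfl | rfl
  exacts [hS.1, hS.1]

variable {X : Type*} [TopologicalSpace X]

theorem exists_mem_USCb_add_eq_on [T1Space X] {f w : X → ℝ} (hfw : f ≤ w) (A : Finset X) :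
    ∃ d ∈ USCb X, 0 ≤ d ∧ ∀ a ∈ A, f a + d a = w a :=
  ⟨(A : Set X).indicator (w - f),
    indicator_mem_USCb_of_finite A.finite_toSet fun x => sub_nonneg.2 (hfw x),
    indicator_nonneg fun x _ => sub_nonneg.2 (hfw x),
    fun a ha => by simp [indicator_of_mem (Finset.mem_coe.2 ha)]⟩

theorem upperDenseIn_USCb [T1Space X] : UpperDenseIn (USCb X) (USCb X) := by
  refine ⟨subset_rfl, fun f hf w ⟨_, hfw⟩ => mem_closure_of_forall_finset fun A => ?_⟩
  obtain ⟨d, hd, hd0, hdA⟩ := exists_mem_USCb_add_eq_on hfw A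
  exact ⟨f + d, ⟨add_mem_USCb hf hd, le_add_of_nonneg_right hd0, by simpa using hd⟩, hdA⟩

theorem upperSeqDenseIn_USCb : UpperSeqDenseIn (USCb X) (USCb X) := by
  refine ⟨subset_rfl, fun f hf => ⟨_, fun k => ⟨add_mem_USCb hf (const_mem_USCb _),
    le_add_of_nonneg_right fun _ => Nat.one_div_pos_of_nat.le, by simpa using const_mem_USCb _⟩,
    tendsto_add_const_one_div f⟩⟩

theorem upperDenseIn_SU [T1Space X] {𝒰 : Set (Set X)} (h𝒰 : 𝒰 ∈ OpenKindCovers X .omega) :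
    UpperDenseIn (SU 𝒰) (USCb X) := by
  refine ⟨SU_subset h𝒰.1, fun f hf w ⟨_, hfw⟩ => mem_closure_of_forall_finset fun A => ?_⟩
  obtain ⟨U, hU, hAU⟩ := h𝒰.2.2.2 A A.finite_toSet
  obtain ⟨d, hd, hd0, hdA⟩ := exists_mem_USCb_add_eq_on hfw A
  have hsub : fU U (f + d) + (f + d) - f = fU U (f + d) + d := by abel
  refine ⟨fU U (f + d) + (f + d), ⟨⟨U, hU, f + d, add_mem_USCb hf hd, rfl⟩, ?_, ?_⟩, fun a ha => ?_⟩
  · exact sub_nonneg.1 (hsub ▸ add_nonneg (fU_nonneg _ _) hd0)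
  · exact hsub ▸ add_mem_USCb (fU_mem_USCb (h𝒰.1 U hU) _) hd
  · simp [fU_apply_of_mem _ (hAU ha), hdA a ha]

theorem upperSeqDenseIn_SU {𝒰 : Set (Set X)} (h𝒰 : 𝒰 ∈ OpenKindCovers X .gamma) :
    UpperSeqDenseIn (SU 𝒰) (USCb X) := by
  obtain ⟨e, -, he𝒰, hev⟩ := exists_injective_eventually_mem h𝒰
  refine ⟨SU_subset h𝒰.1, fun f hf => ⟨fun k => fU (e k) f + f, fun k =>
    ⟨⟨e k, he𝒰 k, f, hf, rfl⟩, le_add_of_nonneg_left (fU_nonneg _ _),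
      by simpa using fU_mem_USCb (h𝒰.1 _ (he𝒰 k)) f⟩, ?_⟩⟩
  refine tendsto_pi_nhds.2 fun x => tendsto_const_nhds.congr' ((hev x).mono fun k hk => ?_)
  simp [fU_apply_of_mem f hk]

theorem USCb_mem_upTilde [T1Space X] {Φ : CoverKind} (hΦ : Φ = .omega ∨ Φ = .gamma) :
    USCb X ∈ upTilde Φ (USCb X) := by
  rcases hΦ with rfl | rfl
  exacts [upperDenseIn_USCb, upperSeqDenseIn_USCb]

theorem SU_mem_upTilde [T1Space X] {Φ : CoverKind} (hΦ : Φ = .omega ∨ Φ = .gamma)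
    {𝒰 : Set (Set X)} (h𝒰 : 𝒰 ∈ OpenKindCovers X Φ) : SU 𝒰 ∈ upTilde Φ (USCb X) := by
  rcases hΦ with rfl | rfl
  exacts [upperDenseIn_SU h𝒰, upperSeqDenseIn_SU h𝒰]

end UpTilde

section Selection

variable {X : Type*} [TopologicalSpace X]

theorem S1_PhiH_of_S1 {Φ : CoverKind} (hΦ : Φ = .omega ∨ Φ = .gamma)
    (hS : S1 (OpenKindCovers X Φ) (OpenKindCovers X .gamma)) (h : X → ℝ) :
    S1 (PhiH Φ h (USCb X)) (PhiH .gamma h (USCb X)) := by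
  intro F hF
  choose I hIF hhI hI using fun n => exists_isUpperApprox_of_mem_PhiH hΦ (hF n)
  obtain ⟨s, hs, hlim⟩ := exists_tendsto_sub_of_S1 hΦ hS hI
  refine ⟨s, fun n => hIF n (hs n), range_subset_iff.2 fun n => (hF n).1 (hIF n (hs n)),
    propGamma_range_of_tendsto (tendsto_sub_nhds_zero_iff.1 hlim) fun n hn => hhI n (hn ▸ hs n),
    forall_mem_range.2 fun n => (hF n).2.2 _ (hIF n (hs n))⟩

theorem S1_upTilde_propGamma_of_S1 [Nonempty X] {Φ : CoverKind} (hΦ : Φ = .omega ∨ Φ = .gamma)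
    (hS : S1 (OpenKindCovers X Φ) (OpenKindCovers X .gamma)) {h : X → ℝ} (hh : h ∈ USCb X) :
    S1 (upTilde Φ (USCb X)) {F | PropGamma h F} := by
  intro S hSΦ
  let t : ℕ → X → ℝ := fun n => h + fun _ => 1 / ((n : ℝ) + 1)
  have ht : ∀ n, t n ∈ USCb X := fun n => add_mem_USCb hh (const_mem_USCb _)
  choose I hIS hI using fun n => exists_isUpperApprox_of_mem_upTilde hΦ (hSΦ n) (ht n)
  obtain ⟨s, hs, hlim⟩ := exists_tendsto_sub_of_S1 hΦ hS hI
  refine ⟨s, fun n => hIS n (hs n), propGamma_range_of_tendsto ?_ fun n hn => ?_⟩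
  · simpa [t] using hlim.add (tendsto_add_const_one_div h)
  · obtain ⟨x⟩ := ‹Nonempty X›
    have hle := (hI n).1 _ (hs n) x
    simp only [hn, t, Pi.add_apply, add_le_iff_nonpos_right] at hle
    exact hle.not_gt Nat.one_div_pos_of_nat

theorem S1_upTilde_Sfam_of_S1 {Φ : CoverKind} (hΦ : Φ = .omega ∨ Φ = .gamma)
    (hS : S1 (OpenKindCovers X Φ) (OpenKindCovers X .gamma)) (hsep : SeqSeparableSet (USCb X)) :
    S1 (upTilde Φ (USCb X)) (Sfam (USCb X)) := by
  intro S hSΦ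
  obtain ⟨D, hDc, hDsub, hD⟩ := hsep
  have hDne : D.Nonempty := let ⟨u, hu, _⟩ := hD 0 zero_mem_USCb; ⟨u 0, hu 0⟩
  obtain ⟨d, rfl⟩ := hDc.exists_eq_range hDne
  choose I hIS hI using fun n =>
    exists_isUpperApprox_of_mem_upTilde hΦ (hSΦ n) (hDsub (mem_range_self n.unpair.1))
  obtain ⟨s, hs, hlim⟩ := exists_tendsto_sub_of_S1 hΦ hS hI
  refine ⟨s, fun n => hIS n (hs n), range_subset_iff.2 fun n =>
    subset_of_mem_upTilde hΦ (hSΦ n) (hIS n (hs n)), fun f hf => ?_⟩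
  obtain ⟨u, hu, hulim⟩ := hD f hf
  choose m hm using hu
  have hpair : Tendsto (fun j => Nat.pair (m j) j) atTop atTop :=
    tendsto_atTop_mono (fun j => Nat.right_le_pair _ _) tendsto_id
  refine ⟨fun j => s (Nat.pair (m j) j), fun j => mem_range_self _, ?_⟩
  simpa [Function.comp_def, hm] using (hlim.comp hpair).add hulim

theorem seqSeparable_of_S1_upTilde_Sfam [T1Space X] {Φ : CoverKind}
    (hΦ : Φ = .omega ∨ Φ = .gamma) (hA : S1 (upTilde Φ (USCb X)) (Sfam (USCb X))) :
    SeqSeparableSet (USCb X) := by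
  obtain ⟨s, -, hs⟩ := hA (fun _ => USCb X) fun _ => USCb_mem_upTilde hΦ
  exact ⟨range s, countable_range s, hs⟩

theorem S1_of_S1_upTilde_Sfam [T1Space X] {Φ : CoverKind} (hΦ : Φ = .omega ∨ Φ = .gamma)
    (hA : S1 (upTilde Φ (USCb X)) (Sfam (USCb X))) :
    S1 (OpenKindCovers X Φ) (OpenKindCovers X .gamma) :=
  S1_of_forall_exists_tendsto_zero hΦ fun 𝒱 h𝒱 => by
    obtain ⟨s, hs, -, hdense⟩ := hA (fun n => SU (𝒱 n)) fun n => SU_mem_upTilde hΦ (h𝒱 n)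
    exact ⟨s, hs, hdense 0 zero_mem_USCb⟩

theorem S1_of_S1_upTilde_propGamma_zero [T1Space X] {Φ : CoverKind}
    (hΦ : Φ = .omega ∨ Φ = .gamma) (hA : S1 (upTilde Φ (USCb X)) {F | PropGamma 0 F}) :
    S1 (OpenKindCovers X Φ) (OpenKindCovers X .gamma) :=
  S1_of_forall_exists_tendsto_zero hΦ fun 𝒱 h𝒱 => by
    obtain ⟨s, hs, hγ⟩ := hA (fun n => SU (𝒱 n)) fun n => SU_mem_upTilde hΦ (h𝒱 n)
    let e := hγ.1.natEmbedding
    exact ⟨s, hs, fun k => e k, fun k => (e k).2,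
      tendsto_of_propGamma hγ (Subtype.val_injective.comp e.injective) fun k => (e k).2⟩

end Selection

section IndicatorCompl

theorem indicator_compl_one_eq_zero_iff {X : Type*} {U : Set X} {x : X} :
    Uᶜ.indicator (1 : X → ℝ) x = 0 ↔ x ∈ U := by
  simp [indicator_apply_eq_zero]

theorem indicator_compl_one_injective {X : Type*} :
    Function.Injective fun U : Set X => Uᶜ.indicator (1 : X → ℝ) := fun U V hUV => by
  ext x
  rw [← indicator_compl_one_eq_zero_iff, ← indicator_compl_one_eq_zero_iff (U := V)]
  exact iff_of_eq (congrArg (· = 0) (congrFun hUV x))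

variable {X : Type*} [TopologicalSpace X]

theorem image_indicator_compl_mem_PhiH {Φ : CoverKind} (hΦ : Φ = .omega ∨ Φ = .gamma)
    {𝒰 : Set (Set X)} (h𝒰 : 𝒰 ∈ OpenKindCovers X Φ) :
    (fun U => Uᶜ.indicator 1) '' 𝒰 ∈ PhiH Φ 0 (USCb X) := by
  have hmem : ∀ U ∈ 𝒰, Uᶜ.indicator 1 ∈ USCb X := fun U hU =>
    indicator_const_mem_USCb (h𝒰.1 U hU).isClosed_compl zero_le_one
  refine ⟨forall_mem_image.2 hmem, ?_, forall_mem_image.2 fun U hU =>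
    ⟨indicator_nonneg fun _ _ => zero_le_one, by simpa using hmem U hU⟩⟩
  rcases hΦ with rfl | rfl
  · refine ⟨fun ⟨U, hU, hU0⟩ => h𝒰.2.2.1 ?_, mem_closure_of_forall_finset fun A => ?_⟩
    · convert hU
      exact (eq_univ_of_forall fun x => indicator_compl_one_eq_zero_iff.1 (congrFun hU0 x)).symm
    · obtain ⟨U, hU, hAU⟩ := h𝒰.2.2.2 A A.finite_toSet
      exact ⟨_, mem_image_of_mem _ hU, fun a ha => indicator_compl_one_eq_zero_iff.2 (hAU ha)⟩
  · refine ⟨h𝒰.2.2.1.image indicator_compl_one_injective.injOn,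
      fun ε hε x => ((h𝒰.2.2.2 x).image fun U => Uᶜ.indicator (1 : X → ℝ)).subset ?_⟩
    rintro _ ⟨⟨U, hU, rfl⟩, hεU⟩
    refine ⟨U, ⟨hU, fun hxU => ?_⟩, rfl⟩
    simp [indicator_compl_one_eq_zero_iff.2 hxU] at hεU
    linarith

theorem S1_of_S1_PhiH_zero {Φ : CoverKind} (hΦ : Φ = .omega ∨ Φ = .gamma)
    (hc : S1 (PhiH Φ 0 (USCb X)) (PhiH .gamma 0 (USCb X))) :
    S1 (OpenKindCovers X Φ) (OpenKindCovers X .gamma) := by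
  intro 𝒰 h𝒰
  obtain ⟨s, hs, -, hγ, -⟩ :=
    hc (fun n => (fun U => Uᶜ.indicator 1) '' 𝒰 n) fun n => image_indicator_compl_mem_PhiH hΦ (h𝒰 n)
  choose U hU hUs using hs
  rw [show s = (fun V => Vᶜ.indicator 1) ∘ U from funext fun n => (hUs n).symm, range_comp] at hγ
  refine ⟨U, hU, mem_gamma_of_infinite (forall_mem_range.2 fun n => (h𝒰 n).1 _ (hU n))
    (hγ.1.of_image _) fun x => ?_⟩
  refine ((hγ.2 1 one_pos x).preimage indicator_compl_one_injective.injOn).subset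
    fun V ⟨hV, hxV⟩ => ⟨mem_image_of_mem _ hV, ?_⟩
  simp [indicator_of_mem (show x ∈ Vᶜ from hxV)]

end IndicatorCompl

/-- For Φ ∈ {Ω, Γ} and X infinite Hausdorff, TFAE:
(a) USC*_p(X) satisfies S₁(Φ̃↑, 𝒮);
(b) USC*_p(X) is sequentially separable and X is an S₁(Φ,Γ)-space;
(c) USC*_p(X) is sequentially separable and satisfies S₁(Φ_h,Γ_h) for every h;
(d) USC*_p(X) is sequentially separable and satisfies S₁(Γ_0̄,Γ_0̄) and
    S₁(Φ̃↑,Γ_h) for every h. -/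
theorem statement10 {X : Type*} [TopologicalSpace X] [T2Space X] [Infinite X]
    (Φ : CoverKind) (hΦ : Φ = CoverKind.omega ∨ Φ = CoverKind.gamma) :
    List.TFAE [
      S1 (upTilde Φ (USCb X)) (Sfam (USCb X)),
      SeqSeparableSet (USCb X) ∧
        S1 (OpenKindCovers X Φ) (OpenKindCovers X CoverKind.gamma),
      SeqSeparableSet (USCb X) ∧
        ∀ h ∈ USCb X, S1 (PhiH Φ h (USCb X)) (PhiH CoverKind.gamma h (USCb X)),
      SeqSeparableSet (USCb X) ∧
        S1 (PhiH CoverKind.gamma (0 : X → ℝ) (USCb X))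
          (PhiH CoverKind.gamma (0 : X → ℝ) (USCb X)) ∧
        ∀ h ∈ USCb X, S1 (upTilde Φ (USCb X)) {F | PropGamma h F}] := by
  have hγ : S1 (OpenKindCovers X Φ) (OpenKindCovers X .gamma) →
      S1 (OpenKindCovers X .gamma) (OpenKindCovers X .gamma) := by
    rcases hΦ with rfl | rfl
    exacts [S1_gamma_of_S1_omega, id]
  tfae_have 1 → 2 := fun hA =>
    ⟨seqSeparable_of_S1_upTilde_Sfam hΦ hA, S1_of_S1_upTilde_Sfam hΦ hA⟩
  tfae_have 2 → 1 := fun ⟨hsep, hS⟩ => S1_upTilde_Sfam_of_S1 hΦ hS hsep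
  tfae_have 2 → 3 := fun ⟨hsep, hS⟩ => ⟨hsep, fun h _ => S1_PhiH_of_S1 hΦ hS h⟩
  tfae_have 3 → 2 := fun ⟨hsep, hc⟩ => ⟨hsep, S1_of_S1_PhiH_zero hΦ (hc 0 zero_mem_USCb)⟩
  tfae_have 2 → 4 := fun ⟨hsep, hS⟩ =>
    ⟨hsep, S1_PhiH_of_S1 (Or.inr rfl) (hγ hS) 0, fun _ hh => S1_upTilde_propGamma_of_S1 hΦ hS hh⟩
  tfae_have 4 → 2 := fun ⟨hsep, _, hup⟩ =>
    ⟨hsep, S1_of_S1_upTilde_propGamma_zero hΦ (hup 0 zero_mem_USCb)⟩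
  tfae_finish

end Selectors
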